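/- arXiv:2010.10619 — 4 statements merged into one kernel-verified Lean document; each statement's English description precedes it below -/
import Mathlib

section
/- Fix x ∈ ℝ^n. Suppose for each w ∈ W: C_w ⊆ ℝ^m is nonempty and compact; u ↦ c^w(x,u) is real-valued and continuous on C_w; u ↦ f^w(x,u) is continuous on C_w; and ū', l' : ℝ^n → ℝ are continuous with l'(y) ≤ ū'(y) for every y ∈ f^w(x, C_w). For each w let u^w ∈ C_w attain min_{u∈C_w}( c^w(x,u) + l'(f^w(x,u)) ), let w* ∈ argmax_{w∈W} ( ū'(f^w(x,u^w)) − l'(f^w(x,u^w)) ), and set x' = f^{w*}(x, u^{w*}). Define a = ∑_{w} p_w min_{u∈C_w}( c^w(x,u) + ū'(f^w(x,u)) ) and b = ∑_{w} p_w min_{u∈C_w}( c^w(x,u) + l'(f^w(x,u)) ). Then 0 ≤ a − b ≤ ū'(x') − l'(x'). -/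
open Filter

/-!
For each noise `w`, the lower minimiser `uopt w` is admissible for the upper problem, and the
lower value is a lower bound for the upper problem because `lbar ≤ ubar` along the dynamics. So
the per-noise gap between the upper and lower Bellman values lies between `0` and the future gap
at `uopt w`, which is at most the gap at `x'` by the choice of `wstar`. Averaging with probability
weights preserves both bounds.
-/

section Minimisation

variable {α : Type*} {φ ψ : α → ℝ} {s : Set α} {u₀ : α}

theorem IsMinOn.csInf_image_eq (hu₀ : u₀ ∈ s) (hmin : IsMinOn φ s u₀) :
    sInf (φ '' s) = φ u₀ :=
  IsLeast.csInf_eq ⟨Set.mem_image_of_mem φ hu₀, Set.forall_mem_image.2 (isMinOn_iff.1 hmin)⟩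

theorem IsMinOn.le_csInf_image_of_le (hu₀ : u₀ ∈ s) (hmin : IsMinOn φ s u₀)
    (hφψ : ∀ u ∈ s, φ u ≤ ψ u) : φ u₀ ≤ sInf (ψ '' s) :=
  le_csInf ⟨ψ u₀, Set.mem_image_of_mem ψ hu₀⟩ <|
    Set.forall_mem_image.2 fun u hu => (isMinOn_iff.1 hmin u hu).trans (hφψ u hu)

theorem IsMinOn.csInf_image_le_of_le (hu₀ : u₀ ∈ s) (hmin : IsMinOn φ s u₀)
    (hφψ : ∀ u ∈ s, φ u ≤ ψ u) : sInf (ψ '' s) ≤ ψ u₀ :=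
  csInf_le ⟨φ u₀, Set.forall_mem_image.2 fun u hu => (isMinOn_iff.1 hmin u hu).trans (hφψ u hu)⟩
    (Set.mem_image_of_mem ψ hu₀)

end Minimisation

theorem Finset.sum_mul_le_of_sum_eq_one {ι : Type*} {s : Finset ι} {p d : ι → ℝ} {G : ℝ}
    (hp : ∀ i ∈ s, 0 ≤ p i) (hpsum : ∑ i ∈ s, p i = 1) (hd : ∀ i ∈ s, d i ≤ G) :
    ∑ i ∈ s, p i * d i ≤ G :=
  calc ∑ i ∈ s, p i * d i ≤ ∑ i ∈ s, p i * G :=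
        Finset.sum_le_sum fun i hi => mul_le_mul_of_nonneg_left (hd i hi) (hp i hi)
    _ = G := by rw [← Finset.sum_mul, hpsum, one_mul]

theorem statement7_general {n m : ℕ}
    (W : Type) [Fintype W]
    (p : W → ℝ) (hp : ∀ w, 0 < p w) (hpsum : ∑ w, p w = 1)
    (C : W → Set (EuclideanSpace ℝ (Fin m)))
    -- the costs u ↦ c^w(x,u) and dynamics u ↦ f^w(x,u) at the fixed state x
    (c : W → EuclideanSpace ℝ (Fin m) → ℝ)
    (f : W → EuclideanSpace ℝ (Fin m) → EuclideanSpace ℝ (Fin n))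
    (ubar lbar : EuclideanSpace ℝ (Fin n) → ℝ)
    (hle : ∀ w, ∀ u ∈ C w, lbar (f w u) ≤ ubar (f w u))
    -- uopt w attains the minimum for the lower function
    (uopt : W → EuclideanSpace ℝ (Fin m))
    (huoptmem : ∀ w, uopt w ∈ C w)
    (huopt : ∀ w, ∀ u ∈ C w,
      c w (uopt w) + lbar (f w (uopt w)) ≤ c w u + lbar (f w u))
    -- wstar maximizes the future gap
    (wstar : W)
    (hwstar : ∀ w, ubar (f w (uopt w)) - lbar (f w (uopt w)) ≤
      ubar (f wstar (uopt wstar)) - lbar (f wstar (uopt wstar)))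
    (x' : EuclideanSpace ℝ (Fin n)) (hx' : x' = f wstar (uopt wstar))
    (a b : ℝ)
    (ha : a = ∑ w, p w * sInf ((fun u => c w u + ubar (f w u)) '' C w))
    (hb : b = ∑ w, p w * sInf ((fun u => c w u + lbar (f w u)) '' C w)) :
    0 ≤ a - b ∧ a - b ≤ ubar x' - lbar x' := by
  set upper : W → ℝ := fun w => sInf ((fun u => c w u + ubar (f w u)) '' C w)
  set lower : W → ℝ := fun w => c w (uopt w) + lbar (f w (uopt w))
  have hmin : ∀ w, IsMinOn (fun u => c w u + lbar (f w u)) (C w) (uopt w) :=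
    fun w => isMinOn_iff.2 (huopt w)
  have hφψ : ∀ w, ∀ u ∈ C w, c w u + lbar (f w u) ≤ c w u + ubar (f w u) :=
    fun w u hu => add_le_add_right (hle w u hu) _
  have hgap_nonneg : ∀ w, 0 ≤ upper w - lower w := fun w =>
    sub_nonneg.2 ((hmin w).le_csInf_image_of_le (huoptmem w) (hφψ w))
  have hgap_le : ∀ w, upper w - lower w ≤ ubar x' - lbar x' := fun w => by
    have := (hmin w).csInf_image_le_of_le (huoptmem w) (hφψ w)
    have := hwstar w
    subst hx'
    linarith
  have hab : a - b = ∑ w, p w * (upper w - lower w) := by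
    simp only [ha, hb, (hmin _).csInf_image_eq (huoptmem _), mul_sub, Finset.sum_sub_distrib,
      upper, lower]
  rw [hab]
  exact ⟨Finset.sum_nonneg fun w _ => mul_nonneg (hp w).le (hgap_nonneg w),
    Finset.sum_mul_le_of_sum_eq_one (fun w _ => (hp w).le) hpsum fun w _ => hgap_le w⟩

/-- One-step gap inequality along the problem-child
trajectory: with `a` (resp. `b`) the tight one-step average Bellman value of
the upper function `ubar` (resp. lower function `lbar`) at the fixed state `x`,
the control `uopt w` optimal for the lower approximation, the worst noise
`wstar` maximizing the future gap and `x'` the corresponding next state, one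
has `0 ≤ a − b ≤ ubar x' − lbar x'`. -/
theorem statement7 {n m : ℕ} (hn : 0 < n) (hm : 0 < m)
    (W : Type) [Fintype W] [Nonempty W]
    (p : W → ℝ) (hp : ∀ w, 0 < p w) (hpsum : ∑ w, p w = 1)
    (x : EuclideanSpace ℝ (Fin n))
    (C : W → Set (EuclideanSpace ℝ (Fin m)))
    (hCne : ∀ w, (C w).Nonempty) (hCcp : ∀ w, IsCompact (C w))
    -- the costs u ↦ c^w(x,u) and dynamics u ↦ f^w(x,u) at the fixed state x
    (c : W → EuclideanSpace ℝ (Fin m) → ℝ)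
    (hccont : ∀ w, ContinuousOn (c w) (C w))
    (f : W → EuclideanSpace ℝ (Fin m) → EuclideanSpace ℝ (Fin n))
    (hfcont : ∀ w, ContinuousOn (f w) (C w))
    (ubar lbar : EuclideanSpace ℝ (Fin n) → ℝ)
    (hucont : Continuous ubar) (hlcont : Continuous lbar)
    (hle : ∀ w, ∀ u ∈ C w, lbar (f w u) ≤ ubar (f w u))
    -- uopt w attains the minimum for the lower function
    (uopt : W → EuclideanSpace ℝ (Fin m))
    (huoptmem : ∀ w, uopt w ∈ C w)
    (huopt : ∀ w, ∀ u ∈ C w,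
      c w (uopt w) + lbar (f w (uopt w)) ≤ c w u + lbar (f w u))
    -- wstar maximizes the future gap
    (wstar : W)
    (hwstar : ∀ w, ubar (f w (uopt w)) - lbar (f w (uopt w)) ≤
      ubar (f wstar (uopt wstar)) - lbar (f wstar (uopt wstar)))
    (x' : EuclideanSpace ℝ (Fin n)) (hx' : x' = f wstar (uopt wstar))
    (a b : ℝ)
    (ha : a = ∑ w, p w * sInf ((fun u => c w u + ubar (f w u)) '' C w))
    (hb : b = ∑ w, p w * sInf ((fun u => c w u + lbar (f w u)) '' C w)) :
    0 ≤ a - b ∧ a - b ≤ ubar x' - lbar x' :=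
  statement7_general W p hp hpsum C c f ubar lbar hle uopt huoptmem huopt wstar hwstar x' hx' a b ha
    hb
end

section
/- Let T ≥ 1 and for each t ∈ {0,…,T} let K_t ⊆ ℝ^n be nonempty compact and L_t > 0. For each t and each k ∈ ℕ, let ū_t^k, l_t^k : K_t → ℝ be L_t-Lipschitz functions such that for all x ∈ K_t and k: l_t^k(x) ≤ l_t^{k+1}(x) ≤ ū_t^{k+1}(x) ≤ ū_t^k(x). Let points x_t^k ∈ K_t satisfy, for all k ∈ ℕ: ū_T^{k+1}(x_T^k) = l_T^{k+1}(x_T^k), and for all t ∈ {0,…,T−1}: ū_t^{k+1}(x_t^k) − l_t^{k+1}(x_t^k) ≤ ū_{t+1}^k(x_{t+1}^k) − l_{t+1}^k(x_{t+1}^k). Then for every t ∈ {0,…,T}: (i) ū_t^k(x_t^k) − l_t^k(x_t^k) → 0 as k → ∞; and (ii) denoting by ū_t* and l_t* the uniform limits on K_t of the monotone sequences (ū_t^k) and (l_t^k), one has ū_t*(x*) = l_t*(x*) for every accumulation point x* of the sequence (x_t^k)_{k∈ℕ}. -/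
/-!
The upper approximations decrease and the lower ones increase; being equi-Lipschitz, they have
Lipschitz pointwise limits, so on a compact set Dini's theorem makes the convergence uniform. Hence
the one-step decrease of the gap, `(u k - l k) - (u (k+1) - l (k+1))`, tends to `0` uniformly, in
particular along the trial points. Splitting the gap at `x_t^k` into this decrease plus the gap of
the next iterate, which the recursion bounds by the gap at time `t + 1`, a backward induction from
the exact final time shows that all gaps vanish. At an accumulation point `x*`, uniform convergence
of continuous functions lets us pass to the limit of the gap along the subsequence.
-/

open Filter Topology NNReal

theorem LipschitzOnWith.of_tendsto {ι α β : Type*} [PseudoEMetricSpace α] [PseudoEMetricSpace β]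
    {l : Filter ι} [l.NeBot] {K : ℝ≥0} {s : Set α} {F : ι → α → β} {f : α → β}
    (hF : ∀ i, LipschitzOnWith K (F i) s) (h : ∀ x ∈ s, Tendsto (F · x) l (𝓝 (f x))) :
    LipschitzOnWith K f s := by
  simp only [lipschitzOnWith_iff_restrict] at hF ⊢
  exact (isClosed_setOfPred_lipschitzWith K).mem_of_tendsto
    (tendsto_pi_nhds.2 fun x => h x x.2) (Eventually.of_forall hF)

section UniformLimits

variable {ι α β : Type*} {l : Filter ι} {s : Set α} {F : ι → α → β} {f : α → β}

theorem TendstoUniformlyOn.tendsto_apply_sub [SeminormedAddCommGroup β]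
    (h : TendstoUniformlyOn F f l s) {ι' : Type*} {l' : Filter ι'} {φ : ι' → ι}
    (hφ : Tendsto φ l' l) {p : ι' → α} (hp : ∀ᶠ k in l', p k ∈ s) :
    Tendsto (fun k => F (φ k) (p k) - f (p k)) l' (𝓝 0) := by
  rw [tendsto_zero_iff_norm_tendsto_zero]
  simpa only [dist_eq_norm', Function.comp_apply] using tendsto_uniformity_iff_dist_tendsto_zero.1
    ((tendstoUniformlyOn_iff_tendsto.1 h).comp (hφ.prodMk (tendsto_principal.2 hp)))

theorem TendstoUniformlyOn.tendsto_apply_sub_apply_succ [SeminormedAddCommGroup β]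
    {F : ℕ → α → β} (h : TendstoUniformlyOn F f atTop s) {p : ℕ → α} (hp : ∀ k, p k ∈ s) :
    Tendsto (fun k => F k (p k) - F (k + 1) (p k)) atTop (𝓝 0) := by
  have hp' : ∀ᶠ k in atTop, p k ∈ s := Eventually.of_forall hp
  simpa only [sub_sub_sub_cancel_right, sub_zero, id_eq] using
    (h.tendsto_apply_sub tendsto_id hp').sub (h.tendsto_apply_sub (tendsto_add_atTop_nat 1) hp')

theorem TendstoUniformlyOn.tendsto_apply_comp [TopologicalSpace α] [UniformSpace β] [l.NeBot]
    (h : TendstoUniformlyOn F f l s) (hF : ∀ i, ContinuousOn (F i) s) (hs : IsClosed s)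
    {φ : ℕ → ι} (hφ : Tendsto φ atTop l) {q : ℕ → α} (hq : ∀ k, q k ∈ s) {x : α}
    (hqx : Tendsto q atTop (𝓝 x)) :
    Tendsto (fun k => F (φ k) (q k)) atTop (𝓝 (f x)) := by
  have hx : x ∈ s := hs.mem_of_tendsto hqx (Eventually.of_forall hq)
  exact (h.seq_tendstoUniformlyOn φ hφ).tendsto_comp
    (h.continuousOn (Eventually.of_forall hF).frequently x hx)
    (tendsto_nhdsWithin_iff.2 ⟨hqx, Eventually.of_forall hq⟩)

end UniformLimits

theorem tendsto_zero_of_le_add_succ {T : ℕ} {g e : ℕ → ℕ → ℝ}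
    (hgT : Tendsto (g T) atTop (𝓝 0)) (he : ∀ t < T, Tendsto (e t) atTop (𝓝 0))
    (hg_nonneg : ∀ t < T, ∀ k, 0 ≤ g t k) (hle : ∀ t < T, ∀ k, g t k ≤ e t k + g (t + 1) k) :
    ∀ t ≤ T, Tendsto (g t) atTop (𝓝 0) := by
  intro t ht
  refine Nat.decreasingInduction (motive := fun t _ => Tendsto (g t) atTop (𝓝 0))
    (fun t ht ih => ?_) hgT ht
  exact squeeze_zero (hg_nonneg t ht) (hle t ht) (by simpa using (he t ht).add ih)

def ApproxSandwichOn {E : Type*} (u l : ℕ → E → ℝ) (s : Set E) : Prop :=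
  ∀ k, ∀ x ∈ s, l k x ≤ l (k + 1) x ∧ l (k + 1) x ≤ u (k + 1) x ∧ u (k + 1) x ≤ u k x

namespace ApproxSandwichOn

variable {E : Type*} {u l : ℕ → E → ℝ} {s : Set E}

theorem antitone_upper (h : ApproxSandwichOn u l s) {x : E} (hx : x ∈ s) :
    Antitone (u · x) :=
  antitone_nat_of_succ_le fun k => (h k x hx).2.2

theorem monotone_lower (h : ApproxSandwichOn u l s) {x : E} (hx : x ∈ s) :
    Monotone (l · x) :=
  monotone_nat_of_le_succ fun k => (h k x hx).1

theorem lower_le_upper (h : ApproxSandwichOn u l s) {x : E} (hx : x ∈ s) (j k : ℕ) :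
    l j x ≤ u k x :=
  calc l j x ≤ l (max j k + 1) x := h.monotone_lower hx (by omega)
    _ ≤ u (max j k + 1) x := (h (max j k) x hx).2.1
    _ ≤ u k x := h.antitone_upper hx (by omega)

theorem tendsto_upper (h : ApproxSandwichOn u l s) {x : E} (hx : x ∈ s) :
    Tendsto (u · x) atTop (𝓝 (⨅ k, u k x)) :=
  tendsto_atTop_ciInf (h.antitone_upper hx)
    ⟨l 0 x, Set.forall_mem_range.2 (h.lower_le_upper hx 0)⟩

theorem tendsto_lower (h : ApproxSandwichOn u l s) {x : E} (hx : x ∈ s) :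
    Tendsto (l · x) atTop (𝓝 (⨆ k, l k x)) :=
  tendsto_atTop_ciSup (h.monotone_lower hx)
    ⟨u 0 x, Set.forall_mem_range.2 fun k => h.lower_le_upper hx k 0⟩

variable [PseudoMetricSpace E] {L : ℝ≥0}

theorem tendstoUniformlyOn_upper (h : ApproxSandwichOn u l s) (hs : IsCompact s)
    (hu : ∀ k, LipschitzOnWith L (u k) s) :
    TendstoUniformlyOn u (fun x => ⨅ k, u k x) atTop s :=
  Antitone.tendstoUniformlyOn_of_forall_tendsto hs (fun k => (hu k).continuousOn)
    (fun _ hx => h.antitone_upper hx)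
    (LipschitzOnWith.of_tendsto hu fun _ hx => h.tendsto_upper hx).continuousOn
    (fun _ hx => h.tendsto_upper hx)

theorem tendstoUniformlyOn_lower (h : ApproxSandwichOn u l s) (hs : IsCompact s)
    (hl : ∀ k, LipschitzOnWith L (l k) s) :
    TendstoUniformlyOn l (fun x => ⨆ k, l k x) atTop s :=
  Monotone.tendstoUniformlyOn_of_forall_tendsto hs (fun k => (hl k).continuousOn)
    (fun _ hx => h.monotone_lower hx)
    (LipschitzOnWith.of_tendsto hl fun _ hx => h.tendsto_lower hx).continuousOn
    (fun _ hx => h.tendsto_lower hx)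

theorem tendsto_gap_sub_gap_succ (h : ApproxSandwichOn u l s) (hs : IsCompact s)
    (hu : ∀ k, LipschitzOnWith L (u k) s) (hl : ∀ k, LipschitzOnWith L (l k) s)
    {p : ℕ → E} (hp : ∀ k, p k ∈ s) :
    Tendsto (fun k => (u k (p k) - l k (p k)) - (u (k + 1) (p k) - l (k + 1) (p k)))
      atTop (𝓝 0) := by
  have hu' := (h.tendstoUniformlyOn_upper hs hu).tendsto_apply_sub_apply_succ hp
  have hl' := (h.tendstoUniformlyOn_lower hs hl).tendsto_apply_sub_apply_succ hp
  convert hu'.sub hl' using 1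
  · ext k; ring
  · simp

end ApproxSandwichOn

theorem statement8_general {n : ℕ} (T : ℕ)
    (K : ℕ → Set (EuclideanSpace ℝ (Fin n)))
    (hKcp : ∀ t ≤ T, IsCompact (K t))
    (L : ℕ → ℝ)
    (ub lb : ℕ → ℕ → EuclideanSpace ℝ (Fin n) → ℝ)
    (hublip : ∀ t ≤ T, ∀ k, ∀ x ∈ K t, ∀ y ∈ K t,
      |ub t k x - ub t k y| ≤ L t * ‖x - y‖)
    (hlblip : ∀ t ≤ T, ∀ k, ∀ x ∈ K t, ∀ y ∈ K t,
      |lb t k x - lb t k y| ≤ L t * ‖x - y‖)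
    (horder : ∀ t ≤ T, ∀ k, ∀ x ∈ K t,
      lb t k x ≤ lb t (k + 1) x ∧ lb t (k + 1) x ≤ ub t (k + 1) x ∧
        ub t (k + 1) x ≤ ub t k x)
    (xp : ℕ → ℕ → EuclideanSpace ℝ (Fin n))
    (hxp : ∀ t ≤ T, ∀ k, xp t k ∈ K t)
    (hTeq : ∀ k, ub T (k + 1) (xp T k) = lb T (k + 1) (xp T k))
    (hgap : ∀ t < T, ∀ k,
      ub t (k + 1) (xp t k) - lb t (k + 1) (xp t k) ≤
        ub (t + 1) k (xp (t + 1) k) - lb (t + 1) k (xp (t + 1) k)) :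
    ∀ t ≤ T,
      Tendsto (fun k => ub t k (xp t k) - lb t k (xp t k)) atTop (nhds 0) ∧
      ∀ ustar lstar : EuclideanSpace ℝ (Fin n) → ℝ,
        TendstoUniformlyOn (fun k => ub t k) ustar atTop (K t) →
        TendstoUniformlyOn (fun k => lb t k) lstar atTop (K t) →
        ∀ xs : EuclideanSpace ℝ (Fin n),
          (∃ σ : ℕ → ℕ, StrictMono σ ∧
            Tendsto (fun k => xp t (σ k)) atTop (nhds xs)) →
          ustar xs = lstar xs := by
  have hlip : ∀ t ≤ T, ∀ f : EuclideanSpace ℝ (Fin n) → ℝ,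
      (∀ x ∈ K t, ∀ y ∈ K t, |f x - f y| ≤ L t * ‖x - y‖) →
        LipschitzOnWith (L t).toNNReal f (K t) := fun t _ f hf =>
    LipschitzOnWith.of_dist_le' fun x hx y hy => by
      rw [Real.dist_eq, dist_eq_norm]
      exact hf x hx y hy
  have hub := fun t ht k => hlip t ht _ (hublip t ht k)
  have hlb := fun t ht k => hlip t ht _ (hlblip t ht k)
  have hsandwich : ∀ t ≤ T, ApproxSandwichOn (ub t) (lb t) (K t) := horder
  have hgap_lim : ∀ t ≤ T,
      Tendsto (fun k => ub t k (xp t k) - lb t k (xp t k)) atTop (𝓝 0) := by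
    have hdecr := fun t (ht : t ≤ T) => (hsandwich t ht).tendsto_gap_sub_gap_succ (hKcp t ht)
      (hub t ht) (hlb t ht) (hxp t ht)
    refine tendsto_zero_of_le_add_succ (by simpa [hTeq] using hdecr T le_rfl)
      (fun t ht => hdecr t ht.le) (fun t ht k => ?_) (fun t ht k => ?_)
    · exact sub_nonneg.2 ((hsandwich t ht.le).lower_le_upper (hxp t ht.le k) k k)
    · linarith [hgap t ht k]
  intro t ht
  refine ⟨hgap_lim t ht, fun ustar lstar hu hl xs ⟨σ, hσ, hxs⟩ => ?_⟩
  have hu_xs : Tendsto (fun k => ub t (σ k) (xp t (σ k))) atTop (𝓝 (ustar xs)) :=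
    hu.tendsto_apply_comp (fun k => (hub t ht k).continuousOn) (hKcp t ht).isClosed
      hσ.tendsto_atTop (fun k => hxp t ht (σ k)) hxs
  have hl_xs : Tendsto (fun k => lb t (σ k) (xp t (σ k))) atTop (𝓝 (lstar xs)) :=
    hl.tendsto_apply_comp (fun k => (hlb t ht k).continuousOn) (hKcp t ht).isClosed
      hσ.tendsto_atTop (fun k => hxp t ht (σ k)) hxs
  exact sub_eq_zero.1 <|
    tendsto_nhds_unique (hu_xs.sub hl_xs) ((hgap_lim t ht).comp hσ.tendsto_atTop)

/-- Vanishing gap along the problem-child trajectory: given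
monotone, sandwiched, equi-Lipschitz upper and lower approximations `ub t k`
and `lb t k` on nonempty compact sets `K t`, and trial points `xp t k ∈ K t`
with an exact gap at the final time and the gap recursion at earlier times,
(i) the gap `ub t k (xp t k) − lb t k (xp t k)` tends to `0`, and
(ii) the uniform limits `ustar` and `lstar` of `(ub t k)_k` and `(lb t k)_k`
coincide at every accumulation point of `(xp t k)_k`. -/
theorem statement8 {n : ℕ} (T : ℕ) (hT : 1 ≤ T)
    (K : ℕ → Set (EuclideanSpace ℝ (Fin n)))
    (hKne : ∀ t ≤ T, (K t).Nonempty) (hKcp : ∀ t ≤ T, IsCompact (K t))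
    (L : ℕ → ℝ) (hL : ∀ t ≤ T, 0 < L t)
    (ub lb : ℕ → ℕ → EuclideanSpace ℝ (Fin n) → ℝ)
    (hublip : ∀ t ≤ T, ∀ k, ∀ x ∈ K t, ∀ y ∈ K t,
      |ub t k x - ub t k y| ≤ L t * ‖x - y‖)
    (hlblip : ∀ t ≤ T, ∀ k, ∀ x ∈ K t, ∀ y ∈ K t,
      |lb t k x - lb t k y| ≤ L t * ‖x - y‖)
    (horder : ∀ t ≤ T, ∀ k, ∀ x ∈ K t,
      lb t k x ≤ lb t (k + 1) x ∧ lb t (k + 1) x ≤ ub t (k + 1) x ∧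
        ub t (k + 1) x ≤ ub t k x)
    (xp : ℕ → ℕ → EuclideanSpace ℝ (Fin n))
    (hxp : ∀ t ≤ T, ∀ k, xp t k ∈ K t)
    (hTeq : ∀ k, ub T (k + 1) (xp T k) = lb T (k + 1) (xp T k))
    (hgap : ∀ t < T, ∀ k,
      ub t (k + 1) (xp t k) - lb t (k + 1) (xp t k) ≤
        ub (t + 1) k (xp (t + 1) k) - lb (t + 1) k (xp (t + 1) k)) :
    ∀ t ≤ T,
      Tendsto (fun k => ub t k (xp t k) - lb t k (xp t k)) atTop (nhds 0) ∧
      ∀ ustar lstar : EuclideanSpace ℝ (Fin n) → ℝ,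
        TendstoUniformlyOn (fun k => ub t k) ustar atTop (K t) →
        TendstoUniformlyOn (fun k => lb t k) lstar atTop (K t) →
        ∀ xs : EuclideanSpace ℝ (Fin n),
          (∃ σ : ℕ → ℕ, StrictMono σ ∧
            Tendsto (fun k => xp t (σ k)) atTop (nhds xs)) →
          ustar xs = lstar xs :=
  statement8_general T K hKcp L ub lb hublip hlblip horder xp hxp hTeq hgap
end

section
/- Suppose for each w ∈ W: c^w(x,u) = max_{i∈I_w} ( ⟨c^{i,w}, (x,u)⟩ + d^{i,w} ) for (x,u) ∈ P_w and c^w(x,u) = +∞ otherwise, where I_w is a finite nonempty index set, c^{i,w} ∈ ℝ^n × ℝ^m, d^{i,w} ∈ ℝ, and P_w ⊆ ℝ^n × ℝ^m is a nonempty convex polyhedron; and f^w(x,u) = A_w x + B_w u with matrices A_w ∈ ℝ^{n×n}, B_w ∈ ℝ^{n×m}. Let φ : ℝ^n → ℝ ∪ {+∞} be a polyhedral function, and define h(x) = ∑_{w∈W} p_w · inf_{u∈ℝ^m} ( c^w(x,u) + φ(A_w x + B_w u) ). If inf_{u∈ℝ^m}( c^w(x,u) + φ(A_w x + B_w u) )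 > −∞ for every x ∈ ℝ^n and every w ∈ W, and h(x₀) < +∞ for some x₀ ∈ ℝ^n, then h is a polyhedral function. -/
open scoped RealInnerProductSpace

/-- A convex polyhedron: an intersection of finitely many closed halfspaces
(each halfspace being the sublevel set of a linear functional). -/
def IsPolyhedron {E : Type*} [AddCommGroup E] [Module ℝ E] (S : Set E) : Prop :=
  ∃ (k : ℕ) (φ : Fin k → E →ₗ[ℝ] ℝ) (b : Fin k → ℝ),
    S = ⋂ i, {z | φ i z ≤ b i}

/-- A polyhedral function `g : E → ℝ ∪ {+∞}`: its epigraph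
`{(z, r) : g z ≤ r}` is a nonempty convex polyhedron in `E × ℝ`. -/
def IsPolyhedralFn {E : Type*} [AddCommGroup E] [Module ℝ E] (g : E → EReal) : Prop :=
  {q : E × ℝ | g q.1 ≤ (q.2 : EReal)}.Nonempty ∧
  IsPolyhedron {q : E × ℝ | g q.1 ≤ (q.2 : EReal)}

/-!
Polyhedrality of epigraphs survives every operation that builds `h`: precomposition with a linear
map and scaling by `p > 0` are preimages under linear maps, the epigraph of `f + g` is the
projection of `{(x, r, t) | f x ≤ t, g x ≤ r - t}` along `t`, and the epigraph of
`x ↦ ⨅ u, G (x, u)` is the projection of the epigraph of `G` along `u`. Projections of polyhedra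
along finite-dimensional factors are polyhedra by Fourier–Motzkin elimination, and the last
identity holds exactly, not just up to closure, because polyhedra are closed along vertical lines.
-/

theorem exists_forall_le_and_forall_le {ι κ : Type*} [Finite ι] [Finite κ] {l : ι → ℝ}
    {u : κ → ℝ} (h : ∀ i j, l i ≤ u j) : ∃ t, (∀ i, l i ≤ t) ∧ ∀ j, t ≤ u j := by
  cases isEmpty_or_nonempty κ with
  | inl _ =>
    obtain ⟨t, ht⟩ := (Set.finite_range l).bddAbove
    exact ⟨t, fun i => ht ⟨i, rfl⟩, isEmptyElim⟩
  | inr _ =>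
    exact ⟨⨅ j, u j, fun i => le_ciInf (h i), ciInf_le (Set.finite_range u).bddBelow⟩

theorem exists_forall_mul_le_iff {ι : Type*} [Finite ι] (γ a : ι → ℝ) :
    (∃ t : ℝ, ∀ i, t * γ i ≤ a i) ↔
      (∀ i, γ i = 0 → 0 ≤ a i) ∧ ∀ i j, γ i < 0 → 0 < γ j → γ i * a j ≤ γ j * a i := by
  constructor
  · rintro ⟨t, ht⟩
    refine ⟨fun i hi => by simpa [hi] using ht i, fun i j hi hj => ?_⟩
    nlinarith [mul_le_mul_of_nonneg_left (ht i) hj.le, mul_le_mul_of_nonpos_left (ht j) hi.le]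
  · rintro ⟨hzero, hpair⟩
    obtain ⟨t, hlow, hupp⟩ := exists_forall_le_and_forall_le
      (l := fun i : {i // γ i < 0} => a i / γ i) (u := fun j : {j // 0 < γ j} => a j / γ j)
      fun i j => by
        rw [div_le_iff_of_neg i.2, div_mul_eq_mul_div, div_le_iff₀ j.2]
        linarith [hpair i j i.2 j.2]
    refine ⟨t, fun i => ?_⟩
    rcases lt_trichotomy (γ i) 0 with hi | hi | hi
    · exact (div_le_iff_of_neg hi).1 (hlow ⟨i, hi⟩)
    · simpa [hi] using hzero i hi
    · exact (le_div_iff₀ hi).1 (hupp ⟨i, hi⟩)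

theorem EReal.add_le_coe_iff_exists {a b : EReal} (ha : a ≠ ⊥) (hb : b ≠ ⊥) (r : ℝ) :
    a + b ≤ r ↔ ∃ t : ℝ, a ≤ t ∧ b ≤ (r - t : ℝ) := by
  constructor
  · intro h
    have ha_top : a ≠ ⊤ := by
      rintro rfl
      rw [EReal.top_add_of_ne_bot hb, top_le_iff] at h
      exact EReal.coe_ne_top r h
    lift a to ℝ using ⟨ha_top, ha⟩
    refine ⟨a, le_rfl, ?_⟩
    rwa [EReal.coe_sub, EReal.le_sub_iff_add_le (.inl (EReal.coe_ne_bot a))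
      (.inl (EReal.coe_ne_top a)), add_comm]
  · rintro ⟨t, hat, hbt⟩
    calc a + b ≤ t + (r - t : ℝ) := add_le_add hat hbt
      _ = r := by rw [← EReal.coe_add, add_sub_cancel]

theorem EReal.sum_ne_bot {ι : Type*} {s : Finset ι} {f : ι → EReal} (h : ∀ i ∈ s, f i ≠ ⊥) :
    ∑ i ∈ s, f i ≠ ⊥ :=
  Finset.sum_induction _ (· ≠ ⊥) (fun _ _ ha hb => EReal.add_ne_bot_iff.2 ⟨ha, hb⟩)
    EReal.zero_ne_bot h

theorem EReal.coe_mul_ne_bot {p : ℝ} (hp : 0 ≤ p) {x : EReal} (hx : x ≠ ⊥) : (p : EReal) * x ≠ ⊥ :=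
  (EReal.mul_ne_bot _ _).2 ⟨.inl (EReal.coe_ne_bot p), .inr hx, .inl (EReal.coe_ne_top p),
    .inl (EReal.coe_nonneg.2 hp)⟩

section Polyhedron

variable {E F : Type*} [AddCommGroup E] [Module ℝ E] [AddCommGroup F] [Module ℝ F]

theorem isPolyhedron_iInter {ι : Type*} [Finite ι] (φ : ι → E →ₗ[ℝ] ℝ) (b : ι → ℝ) :
    IsPolyhedron (⋂ i, {z | φ i z ≤ b i}) := by
  obtain ⟨k, ⟨e⟩⟩ := Finite.exists_equiv_fin ι
  refine ⟨k, fun j => φ (e.symm j), fun j => b (e.symm j), ?_⟩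
  exact (e.symm.iInf_comp (g := fun i => {z | φ i z ≤ b i})).symm

theorem IsPolyhedron.preimage {S : Set F} (hS : IsPolyhedron S) (f : E →ₗ[ℝ] F) :
    IsPolyhedron (f ⁻¹' S) := by
  obtain ⟨k, φ, b, rfl⟩ := hS
  refine ⟨k, fun i => (φ i).comp f, b, ?_⟩
  simp only [Set.preimage_iInter, Set.preimage_ofPred_eq, LinearMap.comp_apply]

theorem IsPolyhedron.inter {S T : Set E} (hS : IsPolyhedron S) (hT : IsPolyhedron T) :
    IsPolyhedron (S ∩ T) := by
  obtain ⟨k, φ, b, rfl⟩ := hS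
  obtain ⟨l, ψ, c, rfl⟩ := hT
  convert isPolyhedron_iInter (Sum.elim φ ψ) (Sum.elim b c) using 1
  simp only [Set.iInter_sum, Sum.elim_inl, Sum.elim_inr]

theorem IsPolyhedron.mem_of_forall_pos_add_smul_mem {S : Set E} (hS : IsPolyhedron S) {x v : E}
    (h : ∀ ε : ℝ, 0 < ε → x + ε • v ∈ S) : x ∈ S := by
  obtain ⟨k, φ, b, rfl⟩ := hS
  simp only [Set.mem_iInter, Set.mem_ofPred_eq, map_add, map_smul, smul_eq_mul] at h ⊢
  intro i
  refine le_of_forall_pos_le_add fun δ hδ => ?_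
  set ε := δ / (|φ i v| + 1)
  have hε : 0 < ε := by positivity
  have hεδ : ε * (|φ i v| + 1) = δ := div_mul_cancel₀ δ (by positivity)
  nlinarith [h ε hε i, neg_abs_le (φ i v)]

theorem LinearMap.apply_prod_eq_add_mul (φ : E × ℝ →ₗ[ℝ] ℝ) (x : E) (t : ℝ) :
    φ (x, t) = φ (x, 0) + t * φ (0, 1) := by
  rw [← smul_eq_mul, ← map_smul, ← map_add, Prod.smul_mk, smul_zero, Prod.mk_add_mk, add_zero,
    smul_eq_mul, mul_one, zero_add]

theorem IsPolyhedron.image_fst_of_real {S : Set (E × ℝ)} (hS : IsPolyhedron S) :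
    IsPolyhedron (Prod.fst '' S) := by
  obtain ⟨k, φ, b, rfl⟩ := hS
  set ψ : Fin k → E →ₗ[ℝ] ℝ := fun i => (φ i).comp (LinearMap.inl ℝ E ℝ)
  set γ : Fin k → ℝ := fun i => φ i (0, 1)
  have hφ : ∀ i x t, φ i (x, t) = ψ i x + t * γ i := fun i => (φ i).apply_prod_eq_add_mul
  have key : Prod.fst '' ⋂ i, {z | φ i z ≤ b i} =
      (⋂ i : {i // γ i = 0}, {x | ψ i x ≤ b i}) ∩
        ⋂ ij : {i // γ i < 0} × {j // 0 < γ j},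
          {x | (γ ij.2 • ψ ij.1 - γ ij.1 • ψ ij.2) x ≤ γ ij.2 * b ij.1 - γ ij.1 * b ij.2} := by
    ext x
    have hmem : x ∈ Prod.fst '' ⋂ i, {z | φ i z ≤ b i} ↔
        ∃ t : ℝ, ∀ i, t * γ i ≤ b i - ψ i x := by
      simp only [Set.mem_image, Set.mem_iInter, Set.mem_ofPred_eq, Prod.exists, exists_and_right,
        exists_eq_right, le_sub_iff_add_le', hφ]
    rw [hmem, exists_forall_mul_le_iff]
    simp only [Set.mem_inter_iff, Set.mem_iInter, Set.mem_ofPred_eq, Subtype.forall, Prod.forall,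
      sub_nonneg, LinearMap.sub_apply, LinearMap.smul_apply, smul_eq_mul]
    refine and_congr Iff.rfl (forall_congr' fun i => ⟨fun h hi j hj => ?_, fun h j hi hj => ?_⟩)
    · linarith [h j hi hj]
    · linarith [h hi j hj]
  rw [key]
  exact (isPolyhedron_iInter _ _).inter (isPolyhedron_iInter _ _)

end Polyhedron

section Projection

variable {E F G : Type*} [AddCommGroup E] [Module ℝ E] [AddCommGroup F] [Module ℝ F]
  [AddCommGroup G] [Module ℝ G]

theorem image_fst_preimage_prodCongr (e : G ≃ₗ[ℝ] F) (S : Set (E × F)) :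
    Prod.fst '' ((LinearEquiv.refl ℝ E).prodCongr e ⁻¹' S) = Prod.fst '' S := by
  ext x
  simp only [Set.mem_image, Set.mem_preimage, Prod.exists, exists_and_right, exists_eq_right,
    LinearEquiv.prodCongr_apply, LinearEquiv.refl_apply]
  exact (e.surjective.exists (p := fun y => (x, y) ∈ S)).symm

theorem image_fst_image_fst_preimage_prodAssoc (S : Set (E × G × F)) :
    Prod.fst '' (Prod.fst '' (LinearEquiv.prodAssoc ℝ E G F ⁻¹' S)) = Prod.fst '' S := by
  ext x
  simp [LinearEquiv.prodAssoc]

theorem IsPolyhedron.image_fst_of_pi {k : ℕ} {S : Set (E × (Fin k → ℝ))} (hS : IsPolyhedron S) :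
    IsPolyhedron (Prod.fst '' S) := by
  induction k with
  | zero =>
    have hfst : Prod.fst '' S = LinearMap.inl ℝ E (Fin 0 → ℝ) ⁻¹' S := by
      ext x
      simp only [Set.mem_image, Prod.exists, exists_and_right, exists_eq_right, Set.mem_preimage,
        LinearMap.inl_apply]
      exact ⟨fun ⟨v, hv⟩ => Subsingleton.elim v 0 ▸ hv, fun hx => ⟨0, hx⟩⟩
    rw [hfst]
    exact hS.preimage _
  | succ k ih =>
    let e := (LinearEquiv.prodComm ℝ (Fin k → ℝ) ℝ).trans (Fin.consLinearEquiv ℝ fun _ => ℝ)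
    rw [← image_fst_preimage_prodCongr e, ← image_fst_image_fst_preimage_prodAssoc]
    exact ih ((hS.preimage _).preimage _).image_fst_of_real

theorem IsPolyhedron.image_fst [FiniteDimensional ℝ F] {S : Set (E × F)} (hS : IsPolyhedron S) :
    IsPolyhedron (Prod.fst '' S) := by
  rw [← image_fst_preimage_prodCongr (Module.finBasis ℝ F).equivFun.symm]
  exact (hS.preimage _).image_fst_of_pi

end Projection

def epigraph {E : Type*} (g : E → EReal) : Set (E × ℝ) := {q | g q.1 ≤ q.2}

section Epigraph

variable {E F : Type*} [AddCommGroup E] [Module ℝ E] [AddCommGroup F] [Module ℝ F]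

theorem IsPolyhedron.epigraph_comp {φ : F → EReal} (hφ : IsPolyhedron (epigraph φ))
    (L : E →ₗ[ℝ] F) : IsPolyhedron (epigraph (φ ∘ L)) :=
  hφ.preimage (L.prodMap LinearMap.id)

theorem IsPolyhedron.epigraph_add {f g : E → EReal} (hf_bot : ∀ x, f x ≠ ⊥)
    (hg_bot : ∀ x, g x ≠ ⊥) (hf : IsPolyhedron (epigraph f)) (hg : IsPolyhedron (epigraph g)) :
    IsPolyhedron (epigraph (f + g)) := by
  let L₁ : (E × ℝ) × ℝ →ₗ[ℝ] E × ℝ :=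
    ((LinearMap.fst ℝ E ℝ).comp (LinearMap.fst ℝ _ ℝ)).prod (LinearMap.snd ℝ _ ℝ)
  let L₂ : (E × ℝ) × ℝ →ₗ[ℝ] E × ℝ :=
    ((LinearMap.fst ℝ E ℝ).comp (LinearMap.fst ℝ _ ℝ)).prod
      ((LinearMap.snd ℝ E ℝ).comp (LinearMap.fst ℝ _ ℝ) - LinearMap.snd ℝ _ ℝ)
  have hsplit : epigraph (f + g) = Prod.fst '' (L₁ ⁻¹' epigraph f ∩ L₂ ⁻¹' epigraph g) := by
    ext ⟨x, r⟩
    simp [epigraph, L₁, L₂, EReal.add_le_coe_iff_exists (hf_bot x) (hg_bot x)]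
  rw [hsplit]
  exact ((hf.preimage L₁).inter (hg.preimage L₂)).image_fst_of_real

theorem IsPolyhedron.epigraph_const_mul {g : E → EReal} (hg : IsPolyhedron (epigraph g)) {p : ℝ}
    (hp : 0 < p) : IsPolyhedron (epigraph fun x => (p : EReal) * g x) := by
  convert hg.preimage (LinearMap.id.prodMap (p⁻¹ • LinearMap.id) : E × ℝ →ₗ[ℝ] E × ℝ)
  ext ⟨x, r⟩
  simp only [epigraph, Set.mem_ofPred_eq, Set.mem_preimage, LinearMap.prodMap_apply,
    LinearMap.id_apply, LinearMap.smul_apply, smul_eq_mul, ← div_eq_inv_mul, EReal.coe_div,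
    EReal.le_div_iff_mul_le (EReal.coe_pos.2 hp) (EReal.coe_ne_top p), mul_comm (g x)]

theorem isPolyhedron_epigraph_zero : IsPolyhedron (epigraph (0 : E → EReal)) := by
  convert isPolyhedron_iInter (fun _ : Unit => -LinearMap.snd ℝ E ℝ) fun _ => 0
  ext ⟨x, r⟩
  simp [epigraph]

theorem isPolyhedron_epigraph_sum {ι : Type*} (s : Finset ι) {f : ι → E → EReal}
    (hf_bot : ∀ i x, f i x ≠ ⊥) (hf : ∀ i, IsPolyhedron (epigraph (f i))) :
    IsPolyhedron (epigraph fun x => ∑ i ∈ s, f i x) := by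
  classical
  induction s using Finset.induction_on with
  | empty => exact isPolyhedron_epigraph_zero
  | insert i s hi ih =>
    simp_rw [Finset.sum_insert hi]
    refine (hf i).epigraph_add (hf_bot i) (fun x => ?_) ih
    exact EReal.sum_ne_bot fun j _ => hf_bot j x

theorem IsPolyhedron.epigraph_iInf [FiniteDimensional ℝ F] {G : E × F → EReal}
    (hG : IsPolyhedron (epigraph G)) : IsPolyhedron (epigraph fun x => ⨅ u, G (x, u)) := by
  let σ : (E × ℝ) × F →ₗ[ℝ] (E × F) × ℝ :=
    (((LinearMap.fst ℝ E ℝ).comp (LinearMap.fst ℝ _ F)).prod (LinearMap.snd ℝ _ F)).prod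
      ((LinearMap.snd ℝ E ℝ).comp (LinearMap.fst ℝ _ F))
  have hQ : IsPolyhedron (Prod.fst '' (σ ⁻¹' epigraph G)) := (hG.preimage σ).image_fst
  have hmem : ∀ x (r : ℝ), (x, r) ∈ Prod.fst '' (σ ⁻¹' epigraph G) ↔ ∃ u, G (x, u) ≤ r := by
    intro x r
    simp [σ, epigraph]
  convert hQ using 1
  ext ⟨x, r⟩
  rw [hmem]
  constructor
  · intro hle
    -- the infimum need not be attained, but the projection is closed in the vertical direction
    refine (hmem x r).1 (hQ.mem_of_forall_pos_add_smul_mem (v := (0, 1)) fun ε hε => ?_)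
    have hlt : ⨅ u, G (x, u) < (r + ε : ℝ) :=
      hle.trans_lt (EReal.coe_lt_coe_iff.2 (lt_add_of_pos_right r hε))
    obtain ⟨u, hu⟩ := iInf_lt_iff.1 hlt
    simpa using (hmem x (r + ε)).2 ⟨u, hu.le⟩
  · rintro ⟨u, hu⟩
    exact (iInf_le (fun u => G (x, u)) u).trans hu

theorem isPolyhedron_epigraph_of_eq_sup'_of_eq_top {ι : Type*} [Fintype ι] [Nonempty ι] {P : Set E}
    (hP : IsPolyhedron P) (ℓ : ι → E →ₗ[ℝ] ℝ) (d : ι → ℝ) {c : E → EReal}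
    (hc_in : ∀ q ∈ P, c q = (Finset.univ.sup' Finset.univ_nonempty fun i => ℓ i q + d i : ℝ))
    (hc_out : ∀ q ∉ P, c q = ⊤) : IsPolyhedron (epigraph c) := by
  have hsplit : epigraph c = LinearMap.fst ℝ E ℝ ⁻¹' P ∩
      ⋂ i, {q | ((ℓ i).comp (LinearMap.fst ℝ E ℝ) - LinearMap.snd ℝ E ℝ) q ≤ -d i} := by
    ext ⟨q, r⟩
    by_cases hq : q ∈ P
    · simp [epigraph, hq, hc_in q hq, add_comm (d _)]
    · simp [epigraph, hq, hc_out q hq]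
  rw [hsplit]
  exact (hP.preimage _).inter (isPolyhedron_iInter _ _)

end Epigraph

theorem statement9_general {n m : ℕ}
    (W : Type) [Fintype W]
    (p : W → ℝ) (hp : ∀ w, 0 < p w)
    (I : W → Type) [∀ w, Fintype (I w)] [∀ w, Nonempty (I w)]
    (a : ∀ w, I w → EuclideanSpace ℝ (Fin n) × EuclideanSpace ℝ (Fin m))
    (d : ∀ w, I w → ℝ)
    (P : W → Set (EuclideanSpace ℝ (Fin n) × EuclideanSpace ℝ (Fin m)))
    (hPpoly : ∀ w, IsPolyhedron (P w))
    (c : W → EuclideanSpace ℝ (Fin n) × EuclideanSpace ℝ (Fin m) → EReal)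
    (hcin : ∀ w, ∀ q ∈ P w, c w q =
      ((Finset.univ.sup' Finset.univ_nonempty
        (fun i : I w => ⟪(a w i).1, q.1⟫ + ⟪(a w i).2, q.2⟫ + d w i) : ℝ) : EReal))
    (hcout : ∀ w, ∀ q ∉ P w, c w q = (⊤ : EReal))
    (A : W → EuclideanSpace ℝ (Fin n) →ₗ[ℝ] EuclideanSpace ℝ (Fin n))
    (B : W → EuclideanSpace ℝ (Fin m) →ₗ[ℝ] EuclideanSpace ℝ (Fin n))
    (φ : EuclideanSpace ℝ (Fin n) → EReal)
    (hφbot : ∀ z, φ z ≠ ⊥) (hφ : IsPolyhedralFn φ)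
    (h : EuclideanSpace ℝ (Fin n) → EReal)
    (hh : ∀ x, h x = ∑ w, (p w : EReal) *
      (⨅ u, (c w (x, u) + φ (A w x + B w u))))
    (hbdd : ∀ x, ∀ w, (⨅ u, (c w (x, u) + φ (A w x + B w u))) ≠ (⊥ : EReal))
    (hfin : ∃ x₀, h x₀ ≠ (⊤ : EReal)) :
    IsPolyhedralFn h := by
  have hc_bot : ∀ w q, c w q ≠ ⊥ := fun w q => by
    by_cases hq : q ∈ P w <;> simp [hcin, hcout, hq]
  have hcost : ∀ w, IsPolyhedron (epigraph (c w)) := fun w => by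
    refine isPolyhedron_epigraph_of_eq_sup'_of_eq_top (hPpoly w)
      (fun i => (innerₛₗ ℝ (a w i).1).comp (LinearMap.fst ℝ _ _) +
        (innerₛₗ ℝ (a w i).2).comp (LinearMap.snd ℝ _ _)) (d w) (fun q hq => ?_) (hcout w)
    simp [hcin w q hq]
  have hstage : ∀ w, IsPolyhedron (epigraph fun x => ⨅ u, c w (x, u) + φ (A w x + B w u)) :=
    fun w => ((hcost w).epigraph_add (hc_bot w) (fun _ => hφbot _)
      (hφ.2.epigraph_comp ((A w).coprod (B w)))).epigraph_iInf
  have hterm_bot : ∀ w x, (p w : EReal) * ⨅ u, c w (x, u) + φ (A w x + B w u) ≠ ⊥ :=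
    fun w x => EReal.coe_mul_ne_bot (hp w).le (hbdd x w)
  have hh_bot : ∀ x, h x ≠ ⊥ := fun x => by
    rw [hh]
    exact EReal.sum_ne_bot fun w _ => hterm_bot w x
  obtain ⟨x₀, hx₀⟩ := hfin
  refine ⟨⟨(x₀, (h x₀).toReal), (EReal.coe_toReal hx₀ (hh_bot x₀)).ge⟩, ?_⟩
  rw [show h = _ from funext hh]
  exact isPolyhedron_epigraph_sum _ hterm_bot fun w => (hstage w).epigraph_const_mul (hp w)

/-- The average Bellman operator of a linear-polyhedral
problem preserves polyhedrality: with polyhedral costs `c^w`, linear dynamics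
`(x,u) ↦ A_w x + B_w u` and a polyhedral function `φ`, the averaged function
`h(x) = ∑_w p_w inf_u ( c^w(x,u) + φ(A_w x + B_w u) )` is polyhedral, provided
the inner infima are `> −∞` everywhere and `h` is finite somewhere. -/
theorem statement9 {n m : ℕ} (hn : 0 < n) (hm : 0 < m)
    (W : Type) [Fintype W] [Nonempty W]
    (p : W → ℝ) (hp : ∀ w, 0 < p w) (hpsum : ∑ w, p w = 1)
    (I : W → Type) [∀ w, Fintype (I w)] [∀ w, Nonempty (I w)]
    (a : ∀ w, I w → EuclideanSpace ℝ (Fin n) × EuclideanSpace ℝ (Fin m))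
    (d : ∀ w, I w → ℝ)
    (P : W → Set (EuclideanSpace ℝ (Fin n) × EuclideanSpace ℝ (Fin m)))
    (hPne : ∀ w, (P w).Nonempty) (hPpoly : ∀ w, IsPolyhedron (P w))
    (c : W → EuclideanSpace ℝ (Fin n) × EuclideanSpace ℝ (Fin m) → EReal)
    (hcin : ∀ w, ∀ q ∈ P w, c w q =
      ((Finset.univ.sup' Finset.univ_nonempty
        (fun i : I w => ⟪(a w i).1, q.1⟫ + ⟪(a w i).2, q.2⟫ + d w i) : ℝ) : EReal))
    (hcout : ∀ w, ∀ q ∉ P w, c w q = (⊤ : EReal))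
    (A : W → EuclideanSpace ℝ (Fin n) →ₗ[ℝ] EuclideanSpace ℝ (Fin n))
    (B : W → EuclideanSpace ℝ (Fin m) →ₗ[ℝ] EuclideanSpace ℝ (Fin n))
    (φ : EuclideanSpace ℝ (Fin n) → EReal)
    (hφbot : ∀ z, φ z ≠ ⊥) (hφ : IsPolyhedralFn φ)
    (h : EuclideanSpace ℝ (Fin n) → EReal)
    (hh : ∀ x, h x = ∑ w, (p w : EReal) *
      (⨅ u, (c w (x, u) + φ (A w x + B w u))))
    (hbdd : ∀ x, ∀ w, (⨅ u, (c w (x, u) + φ (A w x + B w u))) ≠ (⊥ : EReal))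
    (hfin : ∃ x₀, h x₀ ≠ (⊤ : EReal)) :
    IsPolyhedralFn h :=
  statement9_general W p hp I a d P hPpoly c hcin hcout A B φ hφbot hφ h hh hbdd hfin
end

section
/- Let V : ℝ^𝕏 → ℝ be 𝒱-Lipschitz with respect to the ℓ1 norm on the nonnegative orthant ℝ₊^𝕏, and suppose ‖L^u‖_∞ = max_{x∈𝕏}|L^u(x)| ≤ ℒ for every u ∈ 𝕌. Then the function c ↦ min_{u∈𝕌} ( ⟨c, L^u⟩ + ∑_{o∈𝕆} V(cM^{u,o}) ) is (ℒ + 𝒱)-Lipschitz with respect to the ℓ1 norm on ℝ₊^𝕏. -/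
/-!
A minimum of finitely many functions, each `K`-Lipschitz, is `K`-Lipschitz. For a fixed action
`u`, the cost term `c ↦ ⟨c, L^u⟩` is `ℒ`-Lipschitz, and since the `M^{u,o}` are nonnegative with
row sums adding up to one over `o`, the map `c ↦ (cM^{u,o})_o` preserves the orthant and does not
increase the `ℓ1` norm of differences, so `c ↦ ∑_o V(cM^{u,o})` is `𝒱`-Lipschitz.
-/

open Finset Set

theorem ciInf_le_ciInf_add {ι : Type*} [Nonempty ι] {f g : ι → ℝ} {ε : ℝ}
    (hf : BddBelow (range f)) (h : ∀ i, f i ≤ g i + ε) : ⨅ i, f i ≤ (⨅ i, g i) + ε :=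
  sub_le_iff_le_add.mp <| le_ciInf fun i => sub_le_iff_le_add.mpr ((ciInf_le hf i).trans (h i))

theorem abs_ciInf_sub_ciInf_le {ι : Type*} [Finite ι] [Nonempty ι] {f g : ι → ℝ} {ε : ℝ}
    (h : ∀ i, |f i - g i| ≤ ε) : |(⨅ i, f i) - ⨅ i, g i| ≤ ε := by
  have hfg := ciInf_le_ciInf_add (finite_range f).bddBelow fun i =>
    sub_le_iff_le_add'.mp (abs_sub_le_iff.mp (h i)).1
  have hgf := ciInf_le_ciInf_add (finite_range g).bddBelow fun i =>
    sub_le_iff_le_add'.mp (abs_sub_le_iff.mp (h i)).2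
  exact abs_sub_le_iff.mpr ⟨by linarith, by linarith⟩

section

variable {𝕏 : Type*} [Fintype 𝕏]

theorem abs_sum_mul_sub_sum_mul_le {L : 𝕏 → ℝ} {ℒ : ℝ} (hL : ∀ x, |L x| ≤ ℒ) (c c' : 𝕏 → ℝ) :
    |∑ x, c x * L x - ∑ x, c' x * L x| ≤ ℒ * ∑ x, |c x - c' x| := by
  rw [← sum_sub_distrib, mul_sum]
  refine (abs_sum_le_sum_abs _ _).trans (sum_le_sum fun x _ => ?_)
  rw [← sub_mul, abs_mul, mul_comm]
  exact mul_le_mul_of_nonneg_right (hL x) (abs_nonneg _)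

theorem sum_abs_vecMul_le {𝕆 : Type*} [Fintype 𝕆] {M : 𝕆 → 𝕏 → 𝕏 → ℝ}
    (hM : ∀ o x x', 0 ≤ M o x x') (hMsub : ∀ x, ∑ o, ∑ x', M o x x' = 1) (d : 𝕏 → ℝ) :
    ∑ o, ∑ x', |∑ x, d x * M o x x'| ≤ ∑ x, |d x| :=
  calc ∑ o, ∑ x', |∑ x, d x * M o x x'|
      ≤ ∑ o, ∑ x', ∑ x, |d x| * M o x x' := by
        gcongr with o _ x' _
        refine (abs_sum_le_sum_abs _ _).trans_eq (sum_congr rfl fun x _ => ?_)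
        rw [abs_mul, abs_of_nonneg (hM o x x')]
    _ = ∑ x, |d x| * ∑ o, ∑ x', M o x x' := by
        simp only [mul_sum]
        exact (sum_congr rfl fun o _ => sum_comm).trans sum_comm
    _ = ∑ x, |d x| := by simp only [hMsub, mul_one]

theorem nonneg_of_abs_sub_le_mul_sum_abs [Nonempty 𝕏] {V : (𝕏 → ℝ) → ℝ} {𝒱 : ℝ}
    (hV : ∀ c c' : 𝕏 → ℝ, (∀ x, 0 ≤ c x) → (∀ x, 0 ≤ c' x) →
      |V c - V c'| ≤ 𝒱 * ∑ x, |c x - c' x|) : 0 ≤ 𝒱 := by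
  have h := hV 1 0 (fun _ => zero_le_one) (fun _ => le_rfl)
  simp only [Pi.one_apply, Pi.zero_apply, sub_zero, abs_one, sum_const, card_univ, nsmul_eq_mul,
    mul_one] at h
  have hcard : (0 : ℝ) < Fintype.card 𝕏 := by exact_mod_cast Fintype.card_pos
  exact nonneg_of_mul_nonneg_left ((abs_nonneg _).trans h) hcard

theorem abs_sum_comp_vecMul_sub_le {𝕆 : Type*} [Fintype 𝕆] {M : 𝕆 → 𝕏 → 𝕏 → ℝ}
    (hM : ∀ o x x', 0 ≤ M o x x') (hMsub : ∀ x, ∑ o, ∑ x', M o x x' = 1)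
    {V : (𝕏 → ℝ) → ℝ} {𝒱 : ℝ} (h𝒱 : 0 ≤ 𝒱)
    (hV : ∀ c c' : 𝕏 → ℝ, (∀ x, 0 ≤ c x) → (∀ x, 0 ≤ c' x) →
      |V c - V c'| ≤ 𝒱 * ∑ x, |c x - c' x|)
    {c c' : 𝕏 → ℝ} (hc : ∀ x, 0 ≤ c x) (hc' : ∀ x, 0 ≤ c' x) :
    |(∑ o, V fun x' => ∑ x, c x * M o x x') - ∑ o, V fun x' => ∑ x, c' x * M o x x'| ≤
      𝒱 * ∑ x, |c x - c' x| :=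
  calc _ ≤ ∑ o, |(V fun x' => ∑ x, c x * M o x x') - V fun x' => ∑ x, c' x * M o x x'| := by
        rw [← sum_sub_distrib]
        exact abs_sum_le_sum_abs _ _
    _ ≤ ∑ o, 𝒱 * ∑ x', |∑ x, (c x - c' x) * M o x x'| := by
        gcongr with o
        simpa only [← sum_sub_distrib, sub_mul] using
          hV (fun x' => ∑ x, c x * M o x x') (fun x' => ∑ x, c' x * M o x x')
            (fun x' => sum_nonneg fun x _ => mul_nonneg (hc x) (hM o x x'))
            (fun x' => sum_nonneg fun x _ => mul_nonneg (hc' x) (hM o x x'))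
    _ = 𝒱 * ∑ o, ∑ x', |∑ x, (c x - c' x) * M o x x'| := (mul_sum _ _ _).symm
    _ ≤ 𝒱 * ∑ x, |c x - c' x| := by gcongr; exact sum_abs_vecMul_le hM hMsub _

end

theorem statement12_general (𝕏 𝕌 𝕆 : Type)
    [Fintype 𝕏] [Nonempty 𝕏] [Fintype 𝕌] [Nonempty 𝕌] [Fintype 𝕆]
    (M : 𝕌 → 𝕆 → 𝕏 → 𝕏 → ℝ)
    (hMnn : ∀ u o x x', 0 ≤ M u o x x')
    (hMsub : ∀ u x, ∑ o, ∑ x', M u o x x' = 1)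
    (L : 𝕌 → 𝕏 → ℝ) (ℒ : ℝ) (hL : ∀ u x, |L u x| ≤ ℒ)
    (V : (𝕏 → ℝ) → ℝ) (𝒱 : ℝ)
    (hV : ∀ c c' : 𝕏 → ℝ, (∀ x, 0 ≤ c x) → (∀ x, 0 ≤ c' x) →
      |V c - V c'| ≤ 𝒱 * ∑ x, |c x - c' x|) :
    ∀ c c' : 𝕏 → ℝ, (∀ x, 0 ≤ c x) → (∀ x, 0 ≤ c' x) →
      |(⨅ u, ((∑ x, c x * L u x) + ∑ o, V fun x' => ∑ x, c x * M u o x x')) -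
        (⨅ u, ((∑ x, c' x * L u x) + ∑ o, V fun x' => ∑ x, c' x * M u o x x'))| ≤
      (ℒ + 𝒱) * ∑ x, |c x - c' x| := by
  intro c c' hc hc'
  have h𝒱 : 0 ≤ 𝒱 := nonneg_of_abs_sub_le_mul_sum_abs hV
  refine abs_ciInf_sub_ciInf_le fun u => ?_
  rw [add_sub_add_comm, add_mul]
  exact (abs_add_le _ _).trans <| add_le_add (abs_sum_mul_sub_sum_mul_le (hL u) c c')
    (abs_sum_comp_vecMul_sub_le (hMnn u) (hMsub u) h𝒱 hV hc hc')

/-- The one-step POMDP Bellman operator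
`c ↦ min_u ( ⟨c, L^u⟩ + ∑_o V(cM^{u,o}) )` maps a function `V` that is
`𝒱`-Lipschitz for the `ℓ1` norm on the nonnegative orthant to an
`(ℒ + 𝒱)`-Lipschitz function on the nonnegative orthant, provided the matrices
`M^{u,o}` are nonnegative and sub-stochastic
(`∑_o ∑_{x'} M^{u,o}(x,x') = 1`) and `‖L^u‖_∞ ≤ ℒ`. -/
theorem statement12 (𝕏 𝕌 𝕆 : Type)
    [Fintype 𝕏] [Nonempty 𝕏] [Fintype 𝕌] [Nonempty 𝕌] [Fintype 𝕆] [Nonempty 𝕆]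
    (M : 𝕌 → 𝕆 → 𝕏 → 𝕏 → ℝ)
    (hMnn : ∀ u o x x', 0 ≤ M u o x x')
    (hMsub : ∀ u x, ∑ o, ∑ x', M u o x x' = 1)
    (L : 𝕌 → 𝕏 → ℝ) (ℒ : ℝ) (hL : ∀ u x, |L u x| ≤ ℒ)
    (V : (𝕏 → ℝ) → ℝ) (𝒱 : ℝ)
    (hV : ∀ c c' : 𝕏 → ℝ, (∀ x, 0 ≤ c x) → (∀ x, 0 ≤ c' x) →
      |V c - V c'| ≤ 𝒱 * ∑ x, |c x - c' x|) :
    ∀ c c' : 𝕏 → ℝ, (∀ x, 0 ≤ c x) → (∀ x, 0 ≤ c' x) →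
      |(⨅ u, ((∑ x, c x * L u x) + ∑ o, V fun x' => ∑ x, c x * M u o x x')) -
        (⨅ u, ((∑ x, c' x * L u x) + ∑ o, V fun x' => ∑ x, c' x * M u o x x'))| ≤
      (ℒ + 𝒱) * ∑ x, |c x - c' x| :=
  statement12_general 𝕏 𝕌 𝕆 M hMnn hMsub L ℒ hL V 𝒱 hV
end
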